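/- arXiv:1801.04896 — 8 statements merged into one kernel-verified Lean document; each statement's English description precedes it below -/
import Mathlib

section
/- Let α ∈ ℝ³ with α ≠ 0, let k ∈ ℝ, and let f, g ∈ ℝ³ be arbitrary. Then the triple (α, kα, f⊗α + α⊗g) belongs to the wave cone Λ, i.e., there exists (ξ, c) ∈ (ℝ³ \ {0}) × ℝ with (f⊗α + α⊗g)ξ + cα = 0, (f⊗α + α⊗g)ᵀξ + ckα = 0 and α·ξ = 0. -/
/-!
Any two vectors of `ℝ³` have a common nonzero orthogonal vector `ξ`. Taking `ξ ⟂ α` and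
`ξ ⟂ f - k g`, the rank-one terms of `M = f ⊗ α + α ⊗ g` give `M ξ = (g·ξ) α` and
`Mᵀ ξ = (f·ξ) α = k (g·ξ) α`, so `c = -(g·ξ)` solves both equations.
-/

open Matrix

theorem Matrix.exists_ne_zero_mulVec_eq_zero_of_card_lt {K m n : Type*} [Field K] [Fintype m]
    [Fintype n] [DecidableEq n] (M : Matrix m n K) (h : Fintype.card m < Fintype.card n) :
    ∃ v ≠ 0, M *ᵥ v = 0 := by
  have hker : LinearMap.ker M.mulVecLin ≠ ⊥ :=
    LinearMap.ker_ne_bot_of_finrank_lt (by simpa using h)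
  obtain ⟨v, hv, hv0⟩ := (Submodule.ne_bot_iff _).mp hker
  exact ⟨v, hv0, hv⟩

theorem Matrix.exists_ne_zero_dotProduct_eq_zero_of_two_lt {K : Type*} [Field K] {n : ℕ}
    (hn : 2 < n) (u w : Fin n → K) : ∃ ξ ≠ 0, u ⬝ᵥ ξ = 0 ∧ w ⬝ᵥ ξ = 0 := by
  obtain ⟨ξ, hξ, hMξ⟩ :=
    (Matrix.of ![u, w]).exists_ne_zero_mulVec_eq_zero_of_card_lt (by simpa using hn)
  exact ⟨ξ, hξ, congrFun hMξ 0, congrFun hMξ 1⟩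

section RankTwo

variable {R n : Type*} [CommRing R] [Fintype n] {α ξ : n → R} (f g : n → R)

theorem Matrix.vecMulVec_add_vecMulVec_mulVec_of_dotProduct_eq_zero (h : α ⬝ᵥ ξ = 0) :
    (vecMulVec f α + vecMulVec α g) *ᵥ ξ = (g ⬝ᵥ ξ) • α := by
  simp [add_mulVec, vecMulVec_mulVec, h]

theorem Matrix.transpose_vecMulVec_add_vecMulVec_mulVec_of_dotProduct_eq_zero
    (h : α ⬝ᵥ ξ = 0) : (vecMulVec f α + vecMulVec α g)ᵀ *ᵥ ξ = (f ⬝ᵥ ξ) • α := by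
  simpa [add_comm] using vecMulVec_add_vecMulVec_mulVec_of_dotProduct_eq_zero g f h

end RankTwo

theorem stmt2_general (α : Fin 3 → ℝ) (k : ℝ) (f g : Fin 3 → ℝ) :
    ∃ ξ : Fin 3 → ℝ, ξ ≠ 0 ∧ ∃ c : ℝ,
      (vecMulVec f α + vecMulVec α g) *ᵥ ξ + c • α = 0 ∧
      (vecMulVec f α + vecMulVec α g)ᵀ *ᵥ ξ + c • (k • α) = 0 ∧
      α ⬝ᵥ ξ = 0 := by
  obtain ⟨ξ, hξ, hαξ, hwξ⟩ :=
    exists_ne_zero_dotProduct_eq_zero_of_two_lt (by norm_num) α (f - k • g)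
  have hfξ : f ⬝ᵥ ξ = k * (g ⬝ᵥ ξ) := by
    rw [sub_dotProduct, smul_dotProduct, smul_eq_mul, sub_eq_zero] at hwξ
    exact hwξ
  refine ⟨ξ, hξ, -(g ⬝ᵥ ξ), ?_, ?_, hαξ⟩
  · rw [vecMulVec_add_vecMulVec_mulVec_of_dotProduct_eq_zero f g hαξ, neg_smul, add_neg_cancel]
  · rw [transpose_vecMulVec_add_vecMulVec_mulVec_of_dotProduct_eq_zero f g hαξ, hfξ,
      smul_smul, neg_mul, neg_smul, mul_comm, add_neg_cancel]

/-- For `α ≠ 0`, `k ∈ ℝ` and arbitrary `f, g`, the triple `(α, kα, f⊗α + α⊗g)`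
lies in the 3D MHD wave cone. -/
theorem stmt2 (α : Fin 3 → ℝ) (hα : α ≠ 0) (k : ℝ) (f g : Fin 3 → ℝ) :
    ∃ ξ : Fin 3 → ℝ, ξ ≠ 0 ∧ ∃ c : ℝ,
      (vecMulVec f α + vecMulVec α g) *ᵥ ξ + c • α = 0 ∧
      (vecMulVec f α + vecMulVec α g)ᵀ *ᵥ ξ + c • (k • α) = 0 ∧
      α ⬝ᵥ ξ = 0 :=
  stmt2_general α k f g
end

section
/- For M ∈ ℝ^{3×3}, the triple (0, 0, M) belongs to the wave cone Λ if and only if there exist orthonormal vectors f₁, f₂ ∈ ℝ³ and coefficients c₁₁, c₁₂, c₂₁, c₂₂ ∈ ℝ such that M = c₁₁ f₁⊗f₁ + c₁₂ f₁⊗f₂ + c₂₁ f₂⊗f₁ + c₂₂ f₂⊗f₂. -/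
/-!
Normalise `ξ` to a unit vector `e` and complete it to an orthonormal basis `e, f₁, f₂`, so that
`P = f₁ ⊗ f₁ + f₂ ⊗ f₂ = 1 - e ⊗ e`. The conditions `M e = 0 = Mᵀ e` say exactly that
`M P = M = P M`, and expanding `M = P M P` gives `M = ∑ (fᵢ ⬝ M fⱼ) fᵢ ⊗ fⱼ`. Conversely, the unit
vector `f₁ × f₂` is orthogonal to `f₁` and `f₂`, hence lies in the kernel of any such `M` and `Mᵀ`.
-/

open Matrix

section VecMulVec

variable {R n : Type*} [CommRing R] [Fintype n]

theorem vecMulVec_mul_mul_vecMulVec (a b c d : n → R) (N : Matrix n n R) :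
    vecMulVec a b * N * vecMulVec c d = (b ⬝ᵥ N *ᵥ c) • vecMulVec a d := by
  rw [Matrix.mul_assoc, mul_vecMulVec, vecMulVec_mul_vecMulVec, vecMulVec_smul]

theorem eq_sum_smul_vecMulVec_of_mulVec_eq_zero [DecidableEq n] {M : Matrix n n R}
    {e f₁ f₂ : n → R} (hid : vecMulVec e e + vecMulVec f₁ f₁ + vecMulVec f₂ f₂ = 1)
    (he : M *ᵥ e = 0) (hte : Mᵀ *ᵥ e = 0) :
    M = (f₁ ⬝ᵥ M *ᵥ f₁) • vecMulVec f₁ f₁ + (f₁ ⬝ᵥ M *ᵥ f₂) • vecMulVec f₁ f₂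
      + (f₂ ⬝ᵥ M *ᵥ f₁) • vecMulVec f₂ f₁ + (f₂ ⬝ᵥ M *ᵥ f₂) • vecMulVec f₂ f₂ := by
  have hP : vecMulVec f₁ f₁ + vecMulVec f₂ f₂ = 1 - vecMulVec e e := by rw [← hid]; abel
  set P := vecMulVec f₁ f₁ + vecMulVec f₂ f₂
  have hMP : M * P = M := by
    rw [hP, Matrix.mul_sub, Matrix.mul_one, mul_vecMulVec, he, zero_vecMulVec, sub_zero]
  have hPM : P * M = M := by
    rw [hP, Matrix.sub_mul, Matrix.one_mul, vecMulVec_mul, ← mulVec_transpose, hte,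
      vecMulVec_zero, sub_zero]
  calc M = P * M * P := by rw [hPM, hMP]
    _ = _ := by
      simp only [P, Matrix.add_mul, Matrix.mul_add, vecMulVec_mul_mul_vecMulVec]
      abel

end VecMulVec

theorem OrthonormalBasis.sum_vecMulVec_self {ι n : Type*} [Fintype ι] [Fintype n]
    [DecidableEq n] (b : OrthonormalBasis ι ℝ (EuclideanSpace ℝ n)) :
    ∑ i, vecMulVec ⇑(b i) ⇑(b i) = 1 := by
  ext j k
  have hk := congrArg (· j) (b.sum_repr' (EuclideanSpace.single k 1))
  simp only [EuclideanSpace.inner_single_right, Real.ringHom_apply, one_mul, WithLp.ofLp_sum,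
    WithLp.ofLp_smul, Finset.sum_apply, Pi.smul_apply, smul_eq_mul, PiLp.single_apply] at hk
  simpa [Matrix.sum_apply, vecMulVec_apply, Matrix.one_apply, mul_comm] using hk

theorem exists_orthonormalBasis_apply_eq_of_norm_eq_one {ι E : Type*} [Fintype ι]
    [NormedAddCommGroup E] [InnerProductSpace ℝ E] [FiniteDimensional ℝ E]
    (hcard : Module.finrank ℝ E = Fintype.card ι) {e : E} (he : ‖e‖ = 1) (i : ι) :
    ∃ b : OrthonormalBasis ι ℝ E, b i = e := by
  have hv : Orthonormal ℝ (({i} : Set ι).domRestrict fun _ => e) := by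
    rw [orthonormal_subsingleton_iff]
    exact fun _ => he
  obtain ⟨b, hb⟩ := hv.exists_orthonormalBasis_extension_of_card_eq hcard
  exact ⟨b, hb i rfl⟩

theorem exists_orthonormal_pair_vecMulVec_add_eq_one {ξ : Fin 3 → ℝ} (hξ : ξ ≠ 0) :
    ∃ (c : ℝ) (f₁ f₂ : Fin 3 → ℝ), f₁ ⬝ᵥ f₁ = 1 ∧ f₂ ⬝ᵥ f₂ = 1 ∧ f₁ ⬝ᵥ f₂ = 0 ∧
      vecMulVec (c • ξ) (c • ξ) + vecMulVec f₁ f₁ + vecMulVec f₂ f₂ = 1 := by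
  set c := ‖WithLp.toLp 2 ξ‖⁻¹
  have hunit : ‖c • WithLp.toLp 2 ξ‖ = 1 := norm_smul_inv_norm (by simpa using hξ)
  obtain ⟨b, hb⟩ := exists_orthonormalBasis_apply_eq_of_norm_eq_one (by simp) hunit (0 : Fin 3)
  have hdot (i j : Fin 3) : ⇑(b i) ⬝ᵥ ⇑(b j) = if i = j then 1 else 0 := by
    rw [← orthonormal_iff_ite.mp b.orthonormal, EuclideanSpace.inner_eq_star_dotProduct,
      star_trivial, dotProduct_comm]
  refine ⟨c, b 1, b 2, hdot 1 1, hdot 2 2, hdot 1 2, ?_⟩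
  have hb0 : ⇑(b 0) = c • ξ := by rw [hb]; rfl
  rw [← hb0, ← b.sum_vecMulVec_self, Fin.sum_univ_three]

/-- `(0,0,M)` lies in the 3D wave cone iff `M` is a combination of tensor
products of two orthonormal vectors. -/
theorem stmt4 (M : Matrix (Fin 3) (Fin 3) ℝ) :
    (∃ ξ : Fin 3 → ℝ, ξ ≠ 0 ∧ M *ᵥ ξ = 0 ∧ Mᵀ *ᵥ ξ = 0) ↔
    ∃ f₁ f₂ : Fin 3 → ℝ, f₁ ⬝ᵥ f₁ = 1 ∧ f₂ ⬝ᵥ f₂ = 1 ∧ f₁ ⬝ᵥ f₂ = 0 ∧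
      ∃ c₁₁ c₁₂ c₂₁ c₂₂ : ℝ,
        M = c₁₁ • vecMulVec f₁ f₁ + c₁₂ • vecMulVec f₁ f₂
          + c₂₁ • vecMulVec f₂ f₁ + c₂₂ • vecMulVec f₂ f₂ := by
  constructor
  · rintro ⟨ξ, hξ, hMξ, hMtξ⟩
    obtain ⟨c, f₁, f₂, h₁, h₂, h₁₂, hid⟩ := exists_orthonormal_pair_vecMulVec_add_eq_one hξ
    exact ⟨f₁, f₂, h₁, h₂, h₁₂, _, _, _, _, eq_sum_smul_vecMulVec_of_mulVec_eq_zero hid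
      (by rw [mulVec_smul, hMξ, smul_zero]) (by rw [mulVec_smul, hMtξ, smul_zero])⟩
  · rintro ⟨f₁, f₂, h₁, h₂, h₁₂, c₁₁, c₁₂, c₂₁, c₂₂, rfl⟩
    have hunit : f₁ ⨯₃ f₂ ⬝ᵥ f₁ ⨯₃ f₂ = 1 := by rw [cross_dot_cross, h₁, h₂, h₁₂]; ring
    refine ⟨f₁ ⨯₃ f₂, fun h => by simp [h] at hunit, ?_, ?_⟩ <;>
      simp [add_mulVec, smul_mulVec, vecMulVec_mulVec, dot_self_cross, dot_cross_self]
end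

section
/- In two dimensions, let α ∈ ℝ² \ {0} and k ∈ ℝ. Then (α, kα, M) belongs to the wave cone Λ if and only if M = c₁₁ α⊗α + c₁₂ [α⊗α^⊥ + k α^⊥⊗α] for some c₁₁, c₁₂ ∈ ℝ, where α^⊥ = (−α₂, α₁). -/
/-!
A wave direction `ξ` is orthogonal to `α ≠ 0`, hence a nonzero multiple of `α^⊥`, so membership
in the wave cone says exactly that `M α^⊥ = s α` and `Mᵀ α^⊥ = s k α` for some `s`. The matrix
`α ⊗ α^⊥ + k α^⊥ ⊗ α` satisfies this with `s = |α|²`; subtracting the matching multiple of it from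
`M` leaves a matrix annihilating `α^⊥` from both sides, and in the plane such a matrix is a
multiple of `α ⊗ α`.
-/

open Matrix

namespace Matrix

variable {R : Type*}

def perp [Neg R] (v : Fin 2 → R) : Fin 2 → R := ![-v 1, v 0]

section CommRing

variable [CommRing R]

@[simp]
theorem dotProduct_perp_self (v : Fin 2 → R) : v ⬝ᵥ perp v = 0 := by
  simp only [perp, dotProduct, Fin.sum_univ_two, cons_val_zero, cons_val_one]
  ring

@[simp]
theorem perp_dotProduct_perp (u v : Fin 2 → R) : perp u ⬝ᵥ perp v = u ⬝ᵥ v := by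
  simp only [perp, dotProduct, Fin.sum_univ_two, cons_val_zero, cons_val_one]
  ring

@[simp]
theorem perp_perp (v : Fin 2 → R) : perp (perp v) = -v := by
  ext i
  fin_cases i <;> simp [perp]

@[simp]
theorem perp_zero : perp (0 : Fin 2 → R) = 0 := by
  ext i
  fin_cases i <;> simp [perp]

theorem perp_ne_zero {v : Fin 2 → R} (hv : v ≠ 0) : perp v ≠ 0 := by
  intro h
  have := perp_perp v
  rw [h, perp_zero, eq_comm, neg_eq_zero] at this
  exact hv this

theorem dotProduct_self_smul_eq (v w : Fin 2 → R) :
    (v ⬝ᵥ v) • w = (v ⬝ᵥ w) • v + (perp v ⬝ᵥ w) • perp v := by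
  ext i
  fin_cases i <;> simp [perp, dotProduct, Fin.sum_univ_two] <;> ring

theorem vecMulVec_mulVec_eq_smul (u v w : Fin 2 → R) : vecMulVec u v *ᵥ w = (v ⬝ᵥ w) • u := by
  rw [vecMulVec_mulVec, op_smul_eq_smul]

end CommRing

section OrderedField

variable [Field R] [LinearOrder R] [IsStrictOrderedRing R] {v w : Fin 2 → R}

theorem exists_eq_smul_perp_of_dotProduct_eq_zero (hv : v ≠ 0) (h : v ⬝ᵥ w = 0) :
    ∃ t : R, w = t • perp v := by
  have hvv : v ⬝ᵥ v ≠ 0 := mt dotProduct_self_eq_zero.mp hv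
  refine ⟨(v ⬝ᵥ v)⁻¹ * (perp v ⬝ᵥ w), ?_⟩
  rw [mul_smul, ← zero_add ((perp v ⬝ᵥ w) • perp v), ← zero_smul R v, ← h,
    ← dotProduct_self_smul_eq, inv_smul_smul₀ hvv]

theorem exists_eq_smul_of_perp_dotProduct_eq_zero (hv : v ≠ 0) (h : perp v ⬝ᵥ w = 0) :
    ∃ t : R, w = t • v := by
  obtain ⟨t, rfl⟩ := exists_eq_smul_perp_of_dotProduct_eq_zero (perp_ne_zero hv) h
  exact ⟨-t, by rw [perp_perp, smul_neg, neg_smul]⟩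

theorem exists_eq_smul_vecMulVec_self {N : Matrix (Fin 2) (Fin 2) R} (hv : v ≠ 0)
    (hN : N *ᵥ perp v = 0) (hNT : Nᵀ *ᵥ perp v = 0) : ∃ r : R, N = r • vecMulVec v v := by
  have hrow : ∀ i, ∃ t : R, N i = t • v := fun i =>
    exists_eq_smul_of_perp_dotProduct_eq_zero hv
      (by rw [dotProduct_comm]; exact congrFun hN i)
  choose t ht using hrow
  have hN_eq : N = vecMulVec t v := by
    ext i j
    simp [vecMulVec_apply, ht]
  rw [hN_eq, transpose_vecMulVec, vecMulVec_mulVec, op_smul_eq_smul, smul_eq_zero] at hNT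
  obtain ⟨r, rfl⟩ := exists_eq_smul_of_perp_dotProduct_eq_zero hv
    (by rw [dotProduct_comm]; exact hNT.resolve_right hv)
  exact ⟨r, by rw [hN_eq, smul_vecMulVec]⟩

end OrderedField

end Matrix

section WaveCone

variable {R : Type*} [Field R] [LinearOrder R] [IsStrictOrderedRing R]
  {α : Fin 2 → R} {k : R} {M : Matrix (Fin 2) (Fin 2) R}

theorem exists_wave_iff_exists_mulVec_perp (hα : α ≠ 0) :
    (∃ ξ : Fin 2 → R, ξ ≠ 0 ∧ ∃ c : R,
      M *ᵥ ξ + c • α = 0 ∧ Mᵀ *ᵥ ξ + c • (k • α) = 0 ∧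
      α ⬝ᵥ ξ = 0 ∧ (k • α) ⬝ᵥ ξ = 0) ↔
    ∃ s : R, M *ᵥ perp α = s • α ∧ Mᵀ *ᵥ perp α = s • (k • α) := by
  constructor
  · rintro ⟨ξ, hξ, c, h, hT, hαξ, -⟩
    obtain ⟨t, rfl⟩ := exists_eq_smul_perp_of_dotProduct_eq_zero hα hαξ
    have ht : t ≠ 0 := left_ne_zero_of_smul hξ
    have solve : ∀ x y : Fin 2 → R, t • x + c • y = 0 → x = -(t⁻¹ * c) • y := fun x y hxy => by
      rw [← inv_smul_smul₀ ht x, eq_neg_of_add_eq_zero_left hxy, smul_neg, smul_smul, ← neg_smul]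
    rw [mulVec_smul] at h hT
    exact ⟨_, solve _ _ h, solve _ _ hT⟩
  · rintro ⟨s, h, hT⟩
    exact ⟨perp α, perp_ne_zero hα, -s, by simp [h], by simp [hT], dotProduct_perp_self α,
      by rw [smul_dotProduct, dotProduct_perp_self, smul_zero]⟩

theorem exists_mulVec_perp_eq_smul_iff (hα : α ≠ 0) :
    (∃ s : R, M *ᵥ perp α = s • α ∧ Mᵀ *ᵥ perp α = s • (k • α)) ↔
    ∃ c₁₁ c₁₂ : R, M = c₁₁ • vecMulVec α α
      + c₁₂ • (vecMulVec α (perp α) + k • vecMulVec (perp α) α) := by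
  set S := vecMulVec α (perp α) + k • vecMulVec (perp α) α
  have hS : S *ᵥ perp α = (α ⬝ᵥ α) • α := by
    simp only [S, add_mulVec, smul_mulVec, vecMulVec_mulVec_eq_smul, perp_dotProduct_perp,
      dotProduct_perp_self, zero_smul, smul_zero, add_zero]
  have hST : Sᵀ *ᵥ perp α = (α ⬝ᵥ α) • (k • α) := by
    simp only [S, transpose_add, transpose_smul, transpose_vecMulVec, add_mulVec, smul_mulVec,
      vecMulVec_mulVec_eq_smul, perp_dotProduct_perp, dotProduct_perp_self, zero_smul, zero_add,
      smul_comm k]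
  have hA : vecMulVec α α *ᵥ perp α = 0 := by
    rw [vecMulVec_mulVec_eq_smul, dotProduct_perp_self, zero_smul]
  constructor
  · rintro ⟨s, h, hT⟩
    have hαα : α ⬝ᵥ α ≠ 0 := mt dotProduct_self_eq_zero.mp hα
    set c₁₂ := s / (α ⬝ᵥ α)
    obtain ⟨c₁₁, hN⟩ := exists_eq_smul_vecMulVec_self (N := M - c₁₂ • S) hα
      (by rw [sub_mulVec, smul_mulVec, hS, h, smul_smul c₁₂, div_mul_cancel₀ s hαα, sub_self])
      (by rw [transpose_sub, transpose_smul, sub_mulVec, smul_mulVec, hST, hT,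
        smul_smul c₁₂, div_mul_cancel₀ s hαα, sub_self])
    exact ⟨c₁₁, c₁₂, by rw [← hN, sub_add_cancel]⟩
  · rintro ⟨c₁₁, c₁₂, rfl⟩
    refine ⟨c₁₂ * (α ⬝ᵥ α), ?_, ?_⟩
    · rw [add_mulVec, smul_mulVec, smul_mulVec, hS, hA, smul_zero, zero_add, smul_smul]
    · rw [transpose_add, transpose_smul, transpose_smul, transpose_vecMulVec, add_mulVec,
        smul_mulVec, smul_mulVec, hST, hA, smul_zero, zero_add, smul_smul]

end WaveCone

/-- 2D wave cone characterization for triples `(α, kα, M)` with `α ≠ 0`. -/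
theorem stmt6 (α : Fin 2 → ℝ) (hα : α ≠ 0) (k : ℝ) (M : Matrix (Fin 2) (Fin 2) ℝ) :
    (∃ ξ : Fin 2 → ℝ, ξ ≠ 0 ∧ ∃ c : ℝ,
      M *ᵥ ξ + c • α = 0 ∧ Mᵀ *ᵥ ξ + c • (k • α) = 0 ∧
      α ⬝ᵥ ξ = 0 ∧ (k • α) ⬝ᵥ ξ = 0) ↔
    ∃ c₁₁ c₁₂ : ℝ, M = c₁₁ • vecMulVec α α
      + c₁₂ • (vecMulVec α ![-(α 1), α 0] + k • vecMulVec ![-(α 1), α 0] α) :=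
  (exists_wave_iff_exists_mulVec_perp hα).trans (exists_mulVec_perp_eq_smul_iff hα)
end

section
/- In two dimensions, every element of the Λ-convex hull K^Λ of the constraint set K has the following property: if (α, β, M) ∈ K^Λ and we write M = α⊗β + ΠI + N with Π = (tr(M) − α·β)/2, then the matrix N is symmetric, i.e., m₁₂ − α₁β₂ = m₂₁ − α₂β₁. Consequently K^Λ has empty interior in ℝ² × ℝ² × ℝ^{2×2}. -/
open Matrix

/-- The 2D state space: `(z⁺, z⁻, M)`. -/
abbrev MHD2State := (Fin 2 → ℝ) × (Fin 2 → ℝ) × Matrix (Fin 2) (Fin 2) ℝ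

/-- The 2D MHD wave cone. -/
def Lambda2 : Set MHD2State :=
  {p | ∃ ξ : Fin 2 → ℝ, ξ ≠ 0 ∧ ∃ c : ℝ,
    p.2.2 *ᵥ ξ + c • p.1 = 0 ∧ p.2.2ᵀ *ᵥ ξ + c • p.2.1 = 0 ∧
    p.1 ⬝ᵥ ξ = 0 ∧ p.2.1 ⬝ᵥ ξ = 0}

/-- The 2D MHD constraint set `K`. -/
def K2 : Set MHD2State :=
  {p | ∃ Pi0 : ℝ, p.2.2 = vecMulVec p.1 p.2.1 + Pi0 • (1 : Matrix (Fin 2) (Fin 2) ℝ)}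

/-- `Λ`-convexity of a function on the state space. -/
def LambdaConvex2 (f : MHD2State → ℝ) : Prop :=
  ∀ V : MHD2State, ∀ W ∈ Lambda2, ConvexOn ℝ (Set.univ : Set ℝ) fun t : ℝ => f (V + t • W)

/-- The `Λ`-convex hull of `K`. -/
def K2LambdaHull : Set MHD2State :=
  {p | ∀ f : MHD2State → ℝ, LambdaConvex2 f → (∀ q ∈ K2, f q ≤ 0) → f p ≤ 0}

/-!
The defect `g = (m₁₂ − α₁β₂) − (m₂₁ − α₂β₁) = m₁₂ − m₂₁ − α ∧ β` is quadratic along every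
line, with leading coefficient `−W.α ∧ W.β` in direction `W`. For `W ∈ Λ` both `W.α` and
`W.β` are orthogonal to the same `ξ ≠ 0`, hence parallel in the plane, so `g` is affine along
`Λ`-directions and `g²` is `Λ`-convex. It vanishes on `K`, so `g = 0` on `K^Λ`; and `g` strictly
increases in the direction of `m₁₂`, so its zero set, and with it `K^Λ`, has empty interior.
-/

open Set Filter Topology

def wedge (a b : Fin 2 → ℝ) : ℝ := a 0 * b 1 - a 1 * b 0

def symDefect (p : MHD2State) : ℝ := p.2.2 0 1 - p.2.2 1 0 - wedge p.1 p.2.1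

lemma wedge_eq_zero_of_dotProduct_eq_zero {a b ξ : Fin 2 → ℝ} (hξ : ξ ≠ 0)
    (ha : a ⬝ᵥ ξ = 0) (hb : b ⬝ᵥ ξ = 0) : wedge a b = 0 := by
  simp only [dotProduct, Fin.sum_univ_two] at ha hb
  have h0 : wedge a b * ξ 0 = 0 := by
    unfold wedge; linear_combination b 1 * ha - a 1 * hb
  have h1 : wedge a b * ξ 1 = 0 := by
    unfold wedge; linear_combination a 0 * hb - b 0 * ha
  by_contra hw
  exact hξ (funext fun i => by
    fin_cases i
    exacts [(mul_eq_zero.mp h0).resolve_left hw, (mul_eq_zero.mp h1).resolve_left hw])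

lemma wedge_eq_zero_of_mem_Lambda2 {W : MHD2State} (hW : W ∈ Lambda2) : wedge W.1 W.2.1 = 0 := by
  obtain ⟨ξ, hξ, -, -, -, hα, hβ⟩ := hW
  exact wedge_eq_zero_of_dotProduct_eq_zero hξ hα hβ

lemma symDefect_add_smul (V W : MHD2State) (t : ℝ) :
    symDefect (V + t • W) = symDefect V
      + (W.2.2 0 1 - W.2.2 1 0 - wedge W.1 V.2.1 - wedge V.1 W.2.1) * t
      - wedge W.1 W.2.1 * t ^ 2 := by
  simp only [symDefect, wedge, Prod.fst_add, Prod.snd_add, Prod.smul_fst, Prod.smul_snd,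
    Pi.add_apply, Pi.smul_apply, Matrix.add_apply, Matrix.smul_apply, smul_eq_mul]
  ring

lemma convexOn_add_mul_sq (A B : ℝ) : ConvexOn ℝ univ fun t : ℝ => (A + B * t) ^ 2 := by
  have h : (fun t : ℝ => (A + B * t) ^ 2) = (fun x : ℝ => x ^ 2) ∘ AffineMap.lineMap A (A + B) := by
    ext t
    simp only [Function.comp_apply, AffineMap.lineMap_apply_ring']
    ring
  rw [h, ← preimage_univ (f := AffineMap.lineMap A (A + B))]
  exact even_two.convexOn_pow.comp_affineMap _

lemma lambdaConvex2_symDefect_sq : LambdaConvex2 fun p => symDefect p ^ 2 := by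
  intro V W hW
  simp only [symDefect_add_smul, wedge_eq_zero_of_mem_Lambda2 hW, zero_mul, sub_zero]
  exact convexOn_add_mul_sq _ _

lemma symDefect_eq_zero_of_mem_K2 {p : MHD2State} (hp : p ∈ K2) : symDefect p = 0 := by
  obtain ⟨c, hM⟩ := hp
  simp only [symDefect, wedge, hM, Matrix.add_apply, vecMulVec_apply, Matrix.smul_apply,
    Matrix.one_apply_ne zero_ne_one, Matrix.one_apply_ne one_ne_zero, smul_zero]
  ring

lemma symDefect_eq_zero_of_mem_K2LambdaHull {p : MHD2State} (hp : p ∈ K2LambdaHull) :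
    symDefect p = 0 :=
  (sq_nonpos_iff _).mp <| hp _ lambdaConvex2_symDefect_sq fun _ hq => by
    rw [symDefect_eq_zero_of_mem_K2 hq]; norm_num

lemma interior_setOf_symDefect_eq_zero : interior {p | symDefect p = 0} = ∅ := by
  refine eq_empty_of_forall_notMem fun p hp => ?_
  let e : MHD2State := (0, 0, Matrix.single 0 1 1)
  have hline (t : ℝ) : symDefect (p + t • e) = symDefect p + t := by
    rw [symDefect_add_smul]
    simp [e, wedge]
  have hp0 : symDefect p = 0 := interior_subset (s := {p | symDefect p = 0}) hp
  have hnear : ∀ᶠ t : ℝ in 𝓝 0, p + t • e ∈ {p | symDefect p = 0} :=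
    (Continuous.tendsto' (by fun_prop) 0 p (by simp)).eventually_mem
      (mem_interior_iff_mem_nhds.mp hp)
  obtain ⟨t, ht, ht0⟩ : ∃ t : ℝ, p + t • e ∈ {p | symDefect p = 0} ∧ t ≠ 0 :=
    ((hnear.filter_mono nhdsWithin_le_nhds).and self_mem_nhdsWithin).exists (f := 𝓝[≠] 0)
  exact ht0 (by simpa [hline, hp0] using ht)

/-- Every point of the 2D `Λ`-convex hull satisfies the symmetry constraint
`m₁₂ − α₁β₂ = m₂₁ − α₂β₁`; consequently the hull has empty interior. -/
theorem stmt8 :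
    (∀ p ∈ K2LambdaHull,
      p.2.2 0 1 - p.1 0 * p.2.1 1 = p.2.2 1 0 - p.1 1 * p.2.1 0) ∧
    interior K2LambdaHull = ∅ := by
  refine ⟨fun p hp => ?_, ?_⟩
  · have h := symDefect_eq_zero_of_mem_K2LambdaHull hp
    unfold symDefect wedge at h
    linarith
  · exact subset_empty_iff.mp <| interior_setOf_symDefect_eq_zero ▸
      interior_mono fun _ => symDefect_eq_zero_of_mem_K2LambdaHull
end

section
/- Let (u, b, S, a) ∈ ℝ³ × ℝ³ × Sym(3) × ℝ³ and suppose there exists (ξ, c) ∈ (ℝ³ \ {0}) × ℝ such that Sξ + cu = 0, ξ × a + cb = 0, u·ξ = 0 and b·ξ = 0. Then a·b = 0. -/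
open Matrix

/-- Expanding `(ξ × a) × b = (ξ·b) a - (a·b) ξ`, the left side vanishes because `ξ × a` is
parallel to `b`, and the first term on the right because `b ⊥ ξ`. -/
theorem dotProduct_smul_eq_zero_of_cross_add_smul_eq_zero {R : Type*} [CommRing R]
    {ξ a b : Fin 3 → R} {c : R} (hcross : crossProduct ξ a + c • b = 0)
    (hbξ : b ⬝ᵥ ξ = 0) :
    (a ⬝ᵥ b) • ξ = 0 := by
  have hξa : crossProduct ξ a = -(c • b) := eq_neg_of_add_eq_zero_left hcross
  have := cross_cross_eq_smul_sub_smul ξ a b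
  rw [hξa, LinearMap.map_neg₂, LinearMap.map_smul₂, cross_self, dotProduct_comm ξ, hbξ,
    zero_smul, zero_sub, smul_zero, neg_zero, eq_comm, neg_eq_zero] at this
  exact this

theorem stmt9_general (u b : Fin 3 → ℝ) (S : Matrix (Fin 3) (Fin 3) ℝ)
    (a : Fin 3 → ℝ)
    (h : ∃ ξ : Fin 3 → ℝ, ξ ≠ 0 ∧ ∃ c : ℝ,
      S *ᵥ ξ + c • u = 0 ∧ crossProduct ξ a + c • b = 0 ∧
      u ⬝ᵥ ξ = 0 ∧ b ⬝ᵥ ξ = 0) :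
    a ⬝ᵥ b = 0 := by
  obtain ⟨ξ, hξ, c, -, hcross, -, hbξ⟩ := h
  have hab := dotProduct_smul_eq_zero_of_cross_add_smul_eq_zero hcross hbξ
  exact (smul_eq_zero.mp hab).resolve_right hξ

/-- The quantity `a·b` vanishes on the 3D MHD wave cone written in the
variables `(u, b, S, a)`. -/
theorem stmt9 (u b : Fin 3 → ℝ) (S : Matrix (Fin 3) (Fin 3) ℝ) (hS : S.IsSymm)
    (a : Fin 3 → ℝ)
    (h : ∃ ξ : Fin 3 → ℝ, ξ ≠ 0 ∧ ∃ c : ℝ,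
      S *ᵥ ξ + c • u = 0 ∧ crossProduct ξ a + c • b = 0 ∧
      u ⬝ᵥ ξ = 0 ∧ b ⬝ᵥ ξ = 0) :
    a ⬝ᵥ b = 0 :=
  stmt9_general u b S a h
end

section
/- The function Q(u, b, S, a) = a·b on ℝ³ × ℝ³ × Sym(3) × ℝ³ is Λ-affine: for every point V and every wave-cone direction W ∈ Λ, the map t ↦ Q(V + tW) is an affine function of t. Equivalently, since Q is a quadratic form, Q(W) = 0 for every W ∈ Λ. -/
open Matrix

/-- The 3D state space in the variables `(u, b, S, a)`. -/
abbrev MHD3State :=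
  (Fin 3 → ℝ) × (Fin 3 → ℝ) × Matrix (Fin 3) (Fin 3) ℝ × (Fin 3 → ℝ)

/-- The 3D MHD wave cone in the variables `(u, b, S, a)` with `S` symmetric. -/
def Lambda3 : Set MHD3State :=
  {p | p.2.2.1.IsSymm ∧ ∃ ξ : Fin 3 → ℝ, ξ ≠ 0 ∧ ∃ c : ℝ,
    p.2.2.1 *ᵥ ξ + c • p.1 = 0 ∧ crossProduct ξ p.2.2.2 + c • p.2.1 = 0 ∧
    p.1 ⬝ᵥ ξ = 0 ∧ p.2.1 ⬝ᵥ ξ = 0}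

/-- The quadratic form `Q(u,b,S,a) = a·b`. -/
def Q3 (p : MHD3State) : ℝ := p.2.2.2 ⬝ᵥ p.2.1

/-- Dotting the relation with `ξ × b`, the Binet–Cauchy identity leaves `|ξ|² (a · b) = 0`. -/
theorem dotProduct_eq_zero_of_cross_add_smul_eq_zero {R : Type*} [CommRing R] [LinearOrder R]
    [IsStrictOrderedRing R] {ξ a b : Fin 3 → R} {c : R} (hξ : ξ ≠ 0)
    (h : ξ ⨯₃ a + c • b = 0) (hb : b ⬝ᵥ ξ = 0) : a ⬝ᵥ b = 0 := by
  have key : (ξ ⬝ᵥ ξ) * (a ⬝ᵥ b) = 0 := by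
    simpa only [add_dotProduct, smul_dotProduct, cross_dot_cross, dot_cross_self, smul_zero,
      add_zero, zero_dotProduct, dotProduct_comm ξ b, hb, zero_mul, sub_zero]
      using congrArg (· ⬝ᵥ ξ ⨯₃ b) h
  exact (mul_eq_zero.mp key).resolve_left (dotProduct_self_eq_zero.not.mpr hξ)

theorem Q3_eq_zero_of_mem_Lambda3 {W : MHD3State} (hW : W ∈ Lambda3) : Q3 W = 0 := by
  obtain ⟨-, ξ, hξ, c, -, hcross, -, hb⟩ := hW
  exact dotProduct_eq_zero_of_cross_add_smul_eq_zero hξ hcross hb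

theorem Q3_add_smul (V W : MHD3State) (t : ℝ) :
    Q3 (V + t • W) = Q3 V + t * (V.2.2.2 ⬝ᵥ W.2.1 + W.2.2.2 ⬝ᵥ V.2.1) + t ^ 2 * Q3 W := by
  simp only [Q3, Prod.snd_add, Prod.fst_add, Prod.smul_snd, Prod.smul_fst, add_dotProduct,
    dotProduct_add, smul_dotProduct, dotProduct_smul, smul_eq_mul]
  ring

/-- `Q(u,b,S,a) = a·b` is `Λ`-affine: along every wave-cone direction `W` the
map `t ↦ Q(V + tW)` is affine; equivalently `Q` vanishes on `Λ`. -/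
theorem stmt10 :
    (∀ V : MHD3State, ∀ W ∈ Lambda3,
      ∃ m k : ℝ, ∀ t : ℝ, Q3 (V + t • W) = m * t + k) ∧
    (∀ W ∈ Lambda3, Q3 W = 0) := by
  refine ⟨fun V W hW => ⟨V.2.2.2 ⬝ᵥ W.2.1 + W.2.2.2 ⬝ᵥ V.2.1, Q3 V, fun t => ?_⟩,
    fun W => Q3_eq_zero_of_mem_Lambda3⟩
  rw [Q3_add_smul, Q3_eq_zero_of_mem_Lambda3 hW]
  ring
end

section
/- Let α, β, γ, δ ∈ ℝ³ and Π₁, Π₂ ∈ ℝ. Then the difference (α, β, α⊗β + Π₁I) − (γ, δ, γ⊗δ + Π₂I) lies in the wave cone Λ if and only if Π₁ = Π₂ and the four points α, β, γ, δ lie on a common affine hyperplane {x ∈ ℝ³ : x·ξ + c = 0} with ξ ≠ 0. -/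
/-!
Write `a = α - γ`, `b = β - δ` and `M` for the matrix difference. Under `a ⬝ ξ = b ⬝ ξ = 0`
one has `M ξ + c a = (β ⬝ ξ + c) a + (Π₁ - Π₂) ξ` and, symmetrically,
`Mᵀ ξ + c b = (α ⬝ ξ + c) b + (Π₁ - Π₂) ξ`. Pairing the first identity with `ξ` kills the `a`
term, so `Π₁ = Π₂`. Then either both coefficients `β ⬝ ξ + c` and `α ⬝ ξ + c` vanish, and `(ξ, c)`
itself is the hyperplane, or `α = γ` or `β = δ`, leaving three points, which always lie on a
common plane in `ℝ³`.
-/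

open Matrix

theorem Matrix.exists_ne_zero_mulVec_eq_zero_of_lt {K : Type*} [Field K] {m n : ℕ}
    (A : Matrix (Fin m) (Fin n) K) (hmn : m < n) : ∃ x ≠ 0, A *ᵥ x = 0 := by
  have hker : LinearMap.ker A.mulVecLin ≠ ⊥ :=
    LinearMap.ker_ne_bot_of_finrank_lt (by simpa using hmn)
  obtain ⟨x, hx, hx0⟩ := (Submodule.ne_bot_iff _).mp hker
  exact ⟨x, hx0, hx⟩

theorem exists_affine_hyperplane_through_three {K : Type*} [Field K] {n : ℕ}
    (hn : 2 < n) (x y z : Fin n → K) :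
    ∃ ξ ≠ 0, ∃ c : K, x ⬝ᵥ ξ + c = 0 ∧ y ⬝ᵥ ξ + c = 0 ∧ z ⬝ᵥ ξ + c = 0 := by
  obtain ⟨ξ, hξ, h⟩ := (Matrix.of ![y - x, z - x]).exists_ne_zero_mulVec_eq_zero_of_lt hn
  have hy : y ⬝ᵥ ξ = x ⬝ᵥ ξ := sub_eq_zero.mp <| (sub_dotProduct _ _ _).symm.trans (congrFun h 0)
  have hz : z ⬝ᵥ ξ = x ⬝ᵥ ξ := sub_eq_zero.mp <| (sub_dotProduct _ _ _).symm.trans (congrFun h 1)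
  exact ⟨ξ, hξ, -(x ⬝ᵥ ξ), by ring, by rw [hy]; ring, by rw [hz]; ring⟩

theorem eq_zero_of_smul_add_smul_eq_zero {R n : Type*} [Fintype n] [Ring R] [LinearOrder R]
    [IsStrictOrderedRing R] {a ξ : n → R} {s t : R} (hξ : ξ ≠ 0) (ha : a ⬝ᵥ ξ = 0)
    (h : s • a + t • ξ = 0) : t = 0 := by
  have := congrArg (· ⬝ᵥ ξ) h
  simp only [add_dotProduct, smul_dotProduct, ha, smul_eq_mul, mul_zero, zero_add,
    zero_dotProduct] at this
  exact (mul_eq_zero.mp this).resolve_right (mt dotProduct_self_eq_zero.mp hξ)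

section
variable {R n : Type*} [CommRing R] [DecidableEq n]

theorem transpose_vecMulVec_add_smul_one_sub (α β γ δ : n → R) (p₁ p₂ : R) :
    (vecMulVec α β + p₁ • (1 : Matrix n n R) - (vecMulVec γ δ + p₂ • 1))ᵀ
      = vecMulVec β α + p₁ • 1 - (vecMulVec δ γ + p₂ • 1) := by
  simp only [transpose_sub, transpose_add, transpose_vecMulVec, transpose_smul, transpose_one]

theorem vecMulVec_add_smul_one_sub_mulVec_add_smul [Fintype n] {α β γ δ ξ : n → R}
    {p₁ p₂ c : R} (h : β ⬝ᵥ ξ = δ ⬝ᵥ ξ) :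
    (vecMulVec α β + p₁ • (1 : Matrix n n R) - (vecMulVec γ δ + p₂ • 1)) *ᵥ ξ + c • (α - γ)
      = (β ⬝ᵥ ξ + c) • (α - γ) + (p₁ - p₂) • ξ := by
  simp only [sub_mulVec, add_mulVec, vecMulVec_mulVec, smul_mulVec, one_mulVec, op_smul_eq_smul,
    ← h]
  module

end

/-- The difference `(α,β,α⊗β+Π₁I) − (γ,δ,γ⊗δ+Π₂I)` lies in the 3D wave cone
iff `Π₁ = Π₂` and `α, β, γ, δ` lie on a common affine hyperplane. -/
theorem stmt12 (α β γ δ : Fin 3 → ℝ) (Pi1 Pi2 : ℝ) :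
    (∃ ξ : Fin 3 → ℝ, ξ ≠ 0 ∧ ∃ c : ℝ,
      (vecMulVec α β + Pi1 • (1 : Matrix (Fin 3) (Fin 3) ℝ)
        - (vecMulVec γ δ + Pi2 • (1 : Matrix (Fin 3) (Fin 3) ℝ))) *ᵥ ξ
        + c • (α - γ) = 0 ∧
      (vecMulVec α β + Pi1 • (1 : Matrix (Fin 3) (Fin 3) ℝ)
        - (vecMulVec γ δ + Pi2 • (1 : Matrix (Fin 3) (Fin 3) ℝ)))ᵀ *ᵥ ξ
        + c • (β - δ) = 0 ∧
      (α - γ) ⬝ᵥ ξ = 0 ∧ (β - δ) ⬝ᵥ ξ = 0) ↔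
    (Pi1 = Pi2 ∧ ∃ ξ : Fin 3 → ℝ, ξ ≠ 0 ∧ ∃ c : ℝ,
      α ⬝ᵥ ξ + c = 0 ∧ β ⬝ᵥ ξ + c = 0 ∧ γ ⬝ᵥ ξ + c = 0 ∧ δ ⬝ᵥ ξ + c = 0) := by
  simp only [transpose_vecMulVec_add_smul_one_sub, sub_dotProduct, sub_eq_zero]
  constructor
  · rintro ⟨ξ, hξ, c, h₁, h₂, hαγ, hβδ⟩
    rw [vecMulVec_add_smul_one_sub_mulVec_add_smul hβδ] at h₁
    rw [vecMulVec_add_smul_one_sub_mulVec_add_smul hαγ] at h₂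
    have hP : Pi1 = Pi2 := sub_eq_zero.mp <|
      eq_zero_of_smul_add_smul_eq_zero hξ (by rw [sub_dotProduct, hαγ, sub_self]) h₁
    refine ⟨hP, ?_⟩
    rw [hP, sub_self, zero_smul, add_zero, smul_eq_zero, sub_eq_zero] at h₁ h₂
    rcases h₁ with hβ | rfl
    · rcases h₂ with hα | rfl
      · exact ⟨ξ, hξ, c, hα, hβ, hαγ ▸ hα, hβδ ▸ hβ⟩
      · obtain ⟨ζ, hζ, e, hα, hγ, hβ⟩ := exists_affine_hyperplane_through_three (by norm_num) α γ β
        exact ⟨ζ, hζ, e, hα, hβ, hγ, hβ⟩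
    · obtain ⟨ζ, hζ, e, hα, hβ, hδ⟩ := exists_affine_hyperplane_through_three (by norm_num) α β δ
      exact ⟨ζ, hζ, e, hα, hβ, hα, hδ⟩
  · rintro ⟨rfl, ξ, hξ, c, hα, hβ, hγ, hδ⟩
    have hαγ : α ⬝ᵥ ξ = γ ⬝ᵥ ξ := by linarith
    have hβδ : β ⬝ᵥ ξ = δ ⬝ᵥ ξ := by linarith
    refine ⟨ξ, hξ, c, ?_, ?_, hαγ, hβδ⟩
    · rw [vecMulVec_add_smul_one_sub_mulVec_add_smul hβδ, hβ]
      simp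
    · rw [vecMulVec_add_smul_one_sub_mulVec_add_smul hαγ, hα]
      simp
end

section
/- Let α⁺ = (3,1), α⁻ = (−3,1), β⁺ = (2,1), β⁻ = (−2,1) ∈ ℝ². Then the points V^± = (α^±, β^±, α^±⊗β^±) both lie in the 2D constraint set K (with Π = 0), their difference V⁺ − V⁻ lies in the wave cone Λ, and the midpoint (V⁺ + V⁻)/2 = ((0,1), (0,1), diag(6,1)) does not lie in K. Hence the lamination convex hull K^{lc,Λ} strictly contains K. -/
open Matrix

/-- The iterated laminates `K^{N,Λ}`. -/
def lamIter : ℕ → Set MHD2State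
  | 0 => K2
  | N + 1 => lamIter N ∪
      {p | ∃ l : ℝ, l ∈ Set.Icc (0 : ℝ) 1 ∧ ∃ V ∈ lamIter N, ∃ W ∈ lamIter N,
        V - W ∈ Lambda2 ∧ p = l • V + (1 - l) • W}

/-- The lamination convex hull `K^{lc,Λ}`. -/
def lamHull2 : Set MHD2State := ⋃ N : ℕ, lamIter N

/-
The two states `V^± = ((±s, 1), (±t, 1), (±s, 1) ⊗ (±t, 1))` lie in `K` with `Π = 0` and differ by
`((2s, 0), (2t, 0), !![0, 2s; 2t, 0])`, which is a wave for `ξ = (0, 1)` and `c = -1`. Their midpoint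
`((0, 1), (0, 1), diag(st, 1))` would need `Π = st` in the first diagonal entry and `Π = 0` in the second,
so it leaves `K` as soon as `st ≠ 0`, while it lies in `K^{1,Λ}`.
-/

theorem vecMulVec_mem_K2 (a b : Fin 2 → ℝ) : ((a, b, vecMulVec a b) : MHD2State) ∈ K2 :=
  ⟨0, by simp⟩

theorem diag_notMem_K2 {d : ℝ} (hd : d ≠ 0) :
    ((![0, 1], ![0, 1], !![d, 0; 0, 1]) : MHD2State) ∉ K2 := by
  rintro ⟨Pi0, h⟩
  have h00 := congrFun (congrFun h 0) 0
  have h11 := congrFun (congrFun h 1) 1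
  simp at h00 h11
  exact hd (by linarith)

theorem reflected_sub_mem_Lambda2 (s t : ℝ) :
    ((![s, 1], ![t, 1], vecMulVec ![s, 1] ![t, 1]) : MHD2State)
      - (![-s, 1], ![-t, 1], vecMulVec ![-s, 1] ![-t, 1]) ∈ Lambda2 := by
  refine ⟨![0, 1], fun h => by simpa using congrFun h 1, -1, ?_, ?_, ?_, ?_⟩
  · ext i; fin_cases i <;> simp [vecMulVec, vecHead, vecTail]
  · ext i; fin_cases i <;> simp [vecMulVec, vecHead, vecTail]
  · simp [dotProduct]
  · simp [dotProduct]

theorem midpoint_reflected (s t : ℝ) :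
    (1 / 2 : ℝ) • ((![s, 1], ![t, 1], vecMulVec ![s, 1] ![t, 1]) : MHD2State)
      + (1 / 2 : ℝ) • ((![-s, 1], ![-t, 1], vecMulVec ![-s, 1] ![-t, 1]) : MHD2State)
      = (![0, 1], ![0, 1], !![s * t, 0; 0, 1]) := by
  refine Prod.ext ?_ (Prod.ext ?_ ?_)
  · ext i; fin_cases i <;> norm_num
  · ext i; fin_cases i <;> norm_num
  · ext i j; fin_cases i <;> fin_cases j <;> simp [vecMulVec] <;> ring

theorem lamIter_mono : Monotone lamIter :=
  monotone_nat_of_le_succ fun _ => Set.subset_union_left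

theorem K2_subset_lamHull2 : K2 ⊆ lamHull2 :=
  Set.subset_iUnion lamIter 0

theorem lamHull2_lamination {V W : MHD2State} (hV : V ∈ lamHull2) (hW : W ∈ lamHull2)
    (hVW : V - W ∈ Lambda2) {l : ℝ} (hl : l ∈ Set.Icc (0 : ℝ) 1) :
    l • V + (1 - l) • W ∈ lamHull2 := by
  obtain ⟨N, hVN⟩ := Set.mem_iUnion.mp hV
  obtain ⟨M, hWM⟩ := Set.mem_iUnion.mp hW
  refine Set.mem_iUnion.mpr ⟨max N M + 1, Or.inr ⟨l, hl, V, ?_, W, ?_, hVW, rfl⟩⟩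
  · exact lamIter_mono (le_max_left N M) hVN
  · exact lamIter_mono (le_max_right N M) hWM

theorem K2_ssubset_lamHull2_of_lamination {V W : MHD2State} (hV : V ∈ K2) (hW : W ∈ K2)
    (hVW : V - W ∈ Lambda2) {l : ℝ} (hl : l ∈ Set.Icc (0 : ℝ) 1)
    (hK : l • V + (1 - l) • W ∉ K2) : K2 ⊂ lamHull2 :=
  (Set.ssubset_iff_of_subset K2_subset_lamHull2).mpr
    ⟨_, lamHull2_lamination (K2_subset_lamHull2 hV) (K2_subset_lamHull2 hW) hVW hl, hK⟩

/-- With `α^± = (±3,1)`, `β^± = (±2,1)`: the points `V^± = (α^±, β^±, α^±⊗β^±)`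
lie in `K`, their difference lies in `Λ`, their midpoint is
`((0,1),(0,1),diag(6,1))` which does not lie in `K`; hence the lamination
convex hull strictly contains `K`. -/
theorem stmt13 :
    ((![(3:ℝ),1], ![(2:ℝ),1], vecMulVec ![(3:ℝ),1] ![(2:ℝ),1]) ∈ K2) ∧
    ((![(-3:ℝ),1], ![(-2:ℝ),1], vecMulVec ![(-3:ℝ),1] ![(-2:ℝ),1]) ∈ K2) ∧
    (((![(3:ℝ),1], ![(2:ℝ),1], vecMulVec ![(3:ℝ),1] ![(2:ℝ),1]) :
        MHD2State) - (![(-3:ℝ),1], ![(-2:ℝ),1], vecMulVec ![(-3:ℝ),1] ![(-2:ℝ),1])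
      ∈ Lambda2) ∧
    ((1/2 : ℝ) • ((![(3:ℝ),1], ![(2:ℝ),1], vecMulVec ![(3:ℝ),1] ![(2:ℝ),1]) : MHD2State)
      + (1/2 : ℝ) • ((![(-3:ℝ),1], ![(-2:ℝ),1], vecMulVec ![(-3:ℝ),1] ![(-2:ℝ),1]) : MHD2State)
      = (![(0:ℝ),1], ![(0:ℝ),1], !![(6:ℝ),0;0,1])) ∧
    ((![(0:ℝ),1], ![(0:ℝ),1], (!![(6:ℝ),0;0,1] : Matrix (Fin 2) (Fin 2) ℝ)) ∉ K2) ∧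
    K2 ⊂ lamHull2 := by
  have hMid := midpoint_reflected 3 2
  norm_num only at hMid
  have hNot := diag_notMem_K2 (d := 6) (by norm_num)
  have hL := reflected_sub_mem_Lambda2 3 2
  refine ⟨vecMulVec_mem_K2 _ _, vecMulVec_mem_K2 _ _, hL, hMid, hNot, ?_⟩
  refine K2_ssubset_lamHull2_of_lamination (vecMulVec_mem_K2 _ _) (vecMulVec_mem_K2 _ _) hL
    (l := 1 / 2) ⟨by norm_num, by norm_num⟩ ?_
  rwa [show (1 : ℝ) - 1 / 2 = 1 / 2 by norm_num, hMid]
end
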